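/- Let X ⊆ {0,1}^m be a finite set of query points and define: X 'distinguishes' g_{j,k} from 2·val if there exist x, y ∈ X with val(x) < val(y) and g_{j,k}(x) > g_{j,k}(y). If |X| ≤ m'/(8ε) (with ε = 2^{m'−m−1}), then the number of pairs (j,k) with j ∈ [m'], k ∈ [1/(2ε)] such that X distinguishes g_{j,k} from 2·val is at most (m'/(2ε)) − m'/(8ε); i.e., at least m'/(8ε) of the functions g_{j,k} are indistinguishable from 2·val using comparisons among points of X. -/

import Mathlib

/-!
If `X` distinguishes `g_{j,k}` from `2·val`, the inverted pair `x, y` lies in the block `S_k`,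
and `x`, `y` differ at coordinate `j` and agree above it (because `val y ≤ val x + 2^j` and bit `j`
of `val y` is set): `X ∩ S_k` captures `j`. By induction, a nonempty set `Y` captures fewer than
`|Y|` coordinates. Summing over the disjoint blocks, at most `|X| ≤ m′·2^(m−m′)/4` pairs `(j,k)`
are distinguished, so at least three quarters of them are not.
-/

def val {m : ℕ} (x : Fin m → Bool) : ℕ := ∑ i, if x i then 2 ^ (i : ℕ) else 0

/-- The block `S_k` (for `k = 1, …, 2^(m-m′)`): points `x` with
`val x ∈ [(k−1)·2^m′, k·2^m′)`. -/
def Sblock {m : ℕ} (m' k : ℕ) : Finset (Fin m → Bool) :=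
  Finset.univ.filter fun x => (k - 1) * 2 ^ m' ≤ val x ∧ val x < k * 2 ^ m'

/-- `g_{j,k} x = 2·val x − 2·2^j − 1` if `x j = 1` and `x ∈ S_k`, else `2·val x`
(0-indexed coordinate `j` has bit weight `2^j`, so twice the weight is `2^(j+1)`). -/
def gjk {m : ℕ} (m' : ℕ) (j : Fin m) (k : ℕ) (x : Fin m → Bool) : ℤ :=
  if x j = true ∧ x ∈ Sblock (m := m) m' k
  then 2 * (val x : ℤ) - 2 ^ ((j : ℕ) + 1) - 1 else 2 * (val x : ℤ)

open Finset

namespace Nat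

theorem div_two_pow_succ_eq_of_testBit {a b j : ℕ} (hab : a ≤ b) (hba : b ≤ a + 2 ^ j)
    (hb : b.testBit j = true) : a / 2 ^ (j + 1) = b / 2 ^ (j + 1) := by
  refine le_antisymm (Nat.div_le_div_right hab) ((Nat.le_div_iff_mul_le (by positivity)).2 ?_)
  have hmod : 2 ^ j ≤ b % 2 ^ (j + 1) := ge_two_pow_of_testBit (by simpa using hb)
  have := Nat.div_add_mod b (2 ^ (j + 1))
  rw [mul_comm] at this
  omega

theorem testBit_eq_of_div_two_pow_eq {a b n i : ℕ} (h : a / 2 ^ n = b / 2 ^ n) (hi : n ≤ i) :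
    a.testBit i = b.testBit i := by
  obtain ⟨i, rfl⟩ := Nat.exists_eq_add_of_le' hi
  rw [← testBit_div_two_pow, h, testBit_div_two_pow]

theorem div_two_pow_eq_of_le {a b n n' : ℕ} (h : a / 2 ^ n = b / 2 ^ n) (hn : n ≤ n') :
    a / 2 ^ n' = b / 2 ^ n' := by
  obtain ⟨d, rfl⟩ := Nat.exists_eq_add_of_le hn
  rw [pow_add, ← Nat.div_div_eq_div_mul, ← Nat.div_div_eq_div_mul, h]

end Nat

theorem testBit_val {m : ℕ} (x : Fin m → Bool) (i : Fin m) : (val x).testBit i = x i := by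
  have hval : val x = ∑ t ∈ (univ.filter (x ·)).map Fin.valEmbedding, 2 ^ t := by
    rw [sum_map, sum_filter]; rfl
  rw [Bool.eq_iff_iff, ← Nat.mem_bitIndices, ← List.mem_toFinset, hval,
    Finset.toFinset_bitIndices_sum_two_pow]
  simp [Fin.val_inj]

theorem mem_Sblock_iff {m m' k : ℕ} {x : Fin m → Bool} :
    x ∈ Sblock m' k ↔ val x / 2 ^ m' + 1 = k := by
  have hpos : 0 < 2 ^ m' := by positivity
  rcases k with _ | k
  · simp [Sblock]
  · simp only [Sblock, mem_filter, mem_univ, true_and, add_tsub_cancel_right,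
      Nat.add_right_cancel_iff, Nat.div_eq_iff hpos, add_one_mul]
    omega

section Captures

variable {ι β : Type*} [LinearOrder ι]

def Captures (Y : Finset (ι → β)) (j : ι) : Prop :=
  ∃ u ∈ Y, ∃ v ∈ Y, u j ≠ v j ∧ ∀ i, j < i → u i = v i

variable [Fintype ι] [DecidableEq β]

instance (Y : Finset (ι → β)) : DecidablePred (Captures Y) := fun _ => by
  unfold Captures; infer_instance

/-- Splitting `Y` at its largest captured coordinate `j₀` into the points that agree with a
witness `u` at `j₀` and the rest: every smaller captured coordinate is captured in one part. -/
theorem card_filter_captures_lt (Y : Finset (ι → β)) (hY : Y.Nonempty) :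
    #{j | Captures Y j} < #Y := by
  induction Y using Finset.strongInduction with
  | _ Y ih =>
  rcases (univ.filter (Captures Y)).eq_empty_or_nonempty with hC | hC
  · simpa [hC] using hY
  obtain ⟨j₀, hj₀, hmax⟩ := exists_max_image (univ.filter (Captures Y)) id hC
  obtain ⟨u, hu, v, hv, huv, -⟩ := (mem_filter.1 hj₀).2
  set Y₁ := Y.filter (fun w => w j₀ = u j₀)
  set Y₂ := Y.filter (fun w => ¬ w j₀ = u j₀)
  have hY₁ : Y₁ ⊂ Y := filter_ssubset.2 ⟨v, hv, fun h => huv h.symm⟩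
  have hY₂ : Y₂ ⊂ Y := filter_ssubset.2 ⟨u, hu, fun h => h rfl⟩
  have hsub : ({j | Captures Y j} : Finset ι) ⊆
      insert j₀ (({j | Captures Y₁ j} : Finset ι) ∪ ({j | Captures Y₂ j} : Finset ι)) := by
    intro j hj
    rcases eq_or_lt_of_le (hmax j hj) with rfl | hlt
    · exact mem_insert_self _ _
    obtain ⟨p, hp, q, hq, hpq, hagree⟩ := (mem_filter.1 hj).2
    refine mem_insert_of_mem (mem_union.2 ?_)
    by_cases hpj : p j₀ = u j₀
    · exact .inl (mem_filter.2 ⟨mem_univ _, p, mem_filter.2 ⟨hp, hpj⟩,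
        q, mem_filter.2 ⟨hq, (hagree j₀ hlt) ▸ hpj⟩, hpq, hagree⟩)
    · exact .inr (mem_filter.2 ⟨mem_univ _, p, mem_filter.2 ⟨hp, hpj⟩,
        q, mem_filter.2 ⟨hq, (hagree j₀ hlt) ▸ hpj⟩, hpq, hagree⟩)
  have h₁ := ih Y₁ hY₁ ⟨u, mem_filter.2 ⟨hu, rfl⟩⟩
  have h₂ := ih Y₂ hY₂ ⟨v, mem_filter.2 ⟨hv, fun h => huv h.symm⟩⟩
  have hsplit : #Y₁ + #Y₂ = #Y := card_filter_add_card_filter_not _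
  have := (card_le_card hsub).trans <| (card_insert_le _ _).trans <|
    Nat.add_le_add_right (card_union_le _ _) 1
  omega

theorem card_filter_captures_le (Y : Finset (ι → β)) : #{j | Captures Y j} ≤ #Y := by
  rcases Y.eq_empty_or_nonempty with rfl | hY
  · simp [Captures]
  · exact (card_filter_captures_lt Y hY).le

end Captures

def Distinguishes {m : ℕ} (X : Finset (Fin m → Bool)) (g : (Fin m → Bool) → ℤ) : Prop :=
  ∃ x ∈ X, ∃ y ∈ X, val x < val y ∧ g y < g x

instance {m : ℕ} (X : Finset (Fin m → Bool)) (g : (Fin m → Bool) → ℤ) :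
    Decidable (Distinguishes X g) := by
  unfold Distinguishes; infer_instance

/-- Since `2·val − 2^(j+1) − 1 ≤ g_{j,k} ≤ 2·val`, only lowering `y` can invert the pair. -/
theorem gjk_lt_gjk {m m' k : ℕ} {j : Fin m} {x y : Fin m → Bool} (hxy : val x < val y)
    (hg : gjk m' j k y < gjk m' j k x) :
    (y j = true ∧ y ∈ Sblock m' k) ∧ ¬(x j = true ∧ x ∈ Sblock m' k) ∧
      val y ≤ val x + 2 ^ (j : ℕ) := by
  have hpow : (2 : ℤ) ^ ((j : ℕ) + 1) = 2 * ((2 ^ (j : ℕ) : ℕ) : ℤ) := by push_cast; ring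
  have hpos : 0 < 2 ^ (j : ℕ) := by positivity
  unfold gjk at hg
  split_ifs at hg with hy hx hx
  · omega
  · exact ⟨hy, hx, by omega⟩
  · omega
  · omega

theorem captures_of_distinguishes {m m' k : ℕ} {X : Finset (Fin m → Bool)} {j : Fin m}
    (hj : (j : ℕ) < m') (h : Distinguishes X (gjk m' j k)) :
    Captures (X.filter (· ∈ Sblock m' k)) j := by
  obtain ⟨x, hx, y, hy, hxy, hg⟩ := h
  obtain ⟨⟨hyj, hyS⟩, hxlow, hclose⟩ := gjk_lt_gjk hxy hg
  have hdiv : val x / 2 ^ ((j : ℕ) + 1) = val y / 2 ^ ((j : ℕ) + 1) :=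
    Nat.div_two_pow_succ_eq_of_testBit hxy.le hclose (by rw [testBit_val, hyj])
  have hxS : x ∈ Sblock m' k := by
    rw [mem_Sblock_iff] at hyS ⊢
    rwa [Nat.div_two_pow_eq_of_le hdiv hj]
  have hxj : x j = false := by simpa [hxS] using hxlow
  refine ⟨x, mem_filter.2 ⟨hx, hxS⟩, y, mem_filter.2 ⟨hy, hyS⟩, by simp [hxj, hyj],
    fun i hi => ?_⟩
  rw [← testBit_val x i, ← testBit_val y i]
  exact Nat.testBit_eq_of_div_two_pow_eq hdiv hi

theorem sum_card_filter_mem_Sblock_le {m : ℕ} (m' : ℕ) (X : Finset (Fin m → Bool))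
    (s : Finset ℕ) : ∑ k ∈ s, #{x ∈ X | x ∈ Sblock m' k} ≤ #X := by
  simp only [mem_Sblock_iff, sum_card_fiberwise_eq_card_filter]
  exact card_filter_le _ _

theorem card_filter_distinguishes_le {m m' : ℕ} (hm : m' ≤ m) (X : Finset (Fin m → Bool))
    (s : Finset ℕ) :
    #{p ∈ (univ : Finset (Fin m')) ×ˢ s | Distinguishes X (gjk m' (Fin.castLE hm p.1) p.2)}
      ≤ #X := by
  rw [card_eq_sum_card_fiberwise (f := Prod.snd) (t := s)
    fun p hp => (mem_product.1 (mem_filter.1 hp).1).2]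
  refine (sum_le_sum fun k _ => ?_).trans (sum_card_filter_mem_Sblock_le m' X s)
  calc _ ≤ #{j | Captures (X.filter (· ∈ Sblock m' k)) j} := by
        refine card_le_card_of_injOn (fun p => Fin.castLE hm p.1) (fun p hp => ?_) ?_
        · obtain ⟨hpD, rfl⟩ := mem_filter.1 hp
          exact mem_filter.2 ⟨mem_univ _, captures_of_distinguishes p.1.isLt (mem_filter.1 hpD).2⟩
        · rintro ⟨j, k₁⟩ hp ⟨j', k₂⟩ hq hjj'
          exact Prod.ext (Fin.castLE_injective hm hjj')
            ((mem_filter.1 hp).2.trans (mem_filter.1 hq).2.symm)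
    _ ≤ _ := card_filter_captures_le _

/-- `X` distinguishes `g_{j,k}` from `2·val` if some pair of points of `X` is ordered
by `val` but violated by `g_{j,k}`. If `|X| ≤ m′/(8ε) = m′·2^(m−m′)/4` (with
`ε = 2^(m′−m−1)`), then at least `m′/(8ε) = m′·2^(m−m′)/4` of the `m′·2^(m−m′)`
functions `g_{j,k}` are indistinguishable from `2·val` using comparisons in `X`. -/
theorem stmt15 {m : ℕ} (m' : ℕ) (hm : m' ≤ m) (X : Finset (Fin m → Bool))
    (hX : 4 * X.card ≤ m' * 2 ^ (m - m')) :
    m' * 2 ^ (m - m') ≤ 4 *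
      (((Finset.univ : Finset (Fin m')) ×ˢ Finset.Icc 1 (2 ^ (m - m'))).filter
        fun p : Fin m' × ℕ => ¬ ∃ x ∈ X, ∃ y ∈ X, val x < val y ∧
          gjk m' (Fin.castLE hm p.1) p.2 y < gjk m' (Fin.castLE hm p.1) p.2 x).card := by
  have hsplit := card_filter_add_card_filter_not
    (s := (univ : Finset (Fin m')) ×ˢ Icc 1 (2 ^ (m - m')))
    fun p => Distinguishes X (gjk m' (Fin.castLE hm p.1) p.2)
  rw [card_product, card_univ, Fintype.card_fin, Nat.card_Icc, add_tsub_cancel_right] at hsplit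
  have hD := card_filter_distinguishes_le hm X (Icc 1 (2 ^ (m - m')))
  unfold Distinguishes at hsplit hD
  omega
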